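/- arXiv:2009.05910 — 4 statements merged into one kernel-verified Lean document; each statement's English description precedes it below -/
import Mathlib

section
/- Let 𝔡 : k[z] → k[z] ⊗ k[z] be the linear map defined by 𝔡(1) = 0 and 𝔡(z^i) = Σ_{j=1}^{i} z^{i−j} ⊗ z^{j−1} for i ≥ 1, and write 𝔡(φ) = φ₁ ⊗ φ₂. Then for every φ ∈ k[z], applying (1 ⊗ d/dz) to 𝔡(φ) and multiplying by (z ⊗ 1 − 1 ⊗ z) in k[z] ⊗ k[z] yields 𝔡(φ) − 1 ⊗ φ', where φ' is the formal derivative of φ. -/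
open Polynomial TensorProduct

noncomputable section

variable (K : Type*) [Field K]

lemma nc_key (i : ℕ) (_hi : 1 ≤ i) :
    (∑ j ∈ Finset.Icc 1 i,
        ((X : K[X]) ^ (i - j)) ⊗ₜ[K] (derivative ((X : K[X]) ^ (j - 1)))) *
      ((X : K[X]) ⊗ₜ[K] (1 : K[X]) - (1 : K[X]) ⊗ₜ[K] (X : K[X])) =
    (∑ j ∈ Finset.Icc 1 i, ((X : K[X]) ^ (i - j)) ⊗ₜ[K] ((X : K[X]) ^ (j - 1))) -
      (1 : K[X]) ⊗ₜ[K] derivative ((X : K[X]) ^ i) := by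
  set g : ℕ → K[X] ⊗[K] K[X] :=
    fun m => ((X : K[X]) ^ (i - m)) ⊗ₜ[K] (C (m : K) * (X : K[X]) ^ (m - 1)) with hg
  have key : ∀ j ∈ Finset.Icc 1 i,
      (((X : K[X]) ^ (i - j)) ⊗ₜ[K] (derivative ((X : K[X]) ^ (j - 1)))) *
        ((X : K[X]) ⊗ₜ[K] (1 : K[X]) - (1 : K[X]) ⊗ₜ[K] (X : K[X])) =
      (g (j - 1) - g j) + ((X : K[X]) ^ (i - j)) ⊗ₜ[K] ((X : K[X]) ^ (j - 1)) := by
    intro j hj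
    simp only [Finset.mem_Icc] at hj
    obtain ⟨hj1, hj2⟩ := hj
    obtain ⟨m, rfl⟩ : ∃ m, j = m + 1 := ⟨j - 1, by omega⟩
    simp only [hg, Nat.add_sub_cancel, derivative_X_pow, mul_sub,
      Algebra.TensorProduct.tmul_mul_tmul, mul_one, one_mul]
    have e1 : i - (m + 1) + 1 = i - m := by omega
    have e2 : (X : K[X]) ^ (i - (m + 1)) * X = (X : K[X]) ^ (i - m) := by
      rw [← pow_succ, e1]
    have e3 : (C ((m : K)) * X ^ (m - 1)) * X = C ((m : K)) * X ^ m := by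
      rcases Nat.eq_zero_or_pos m with h | h
      · simp [h]
      · rw [mul_assoc, ← pow_succ]
        congr 2
        omega
    rw [e2, e3]
    have e4 : (C (((m : K)) + 1) * (X : K[X]) ^ m) =
        C ((m : K)) * X ^ m + X ^ m := by
      rw [map_add, add_mul, map_one, one_mul]
    push_cast
    rw [e4]
    rw [TensorProduct.tmul_add]
    abel
  rw [Finset.sum_mul, Finset.sum_congr rfl key, Finset.sum_add_distrib]
  have icc : Finset.Icc 1 i = Finset.Ico 1 (i + 1) := by
    rw [Finset.Ico_add_one_right_eq_Icc]
  have tele : ∑ j ∈ Finset.Icc 1 i, (g (j - 1) - g j) = g 0 - g i := by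
    rw [icc, Finset.sum_Ico_eq_sum_range]
    simp only [Nat.add_sub_cancel, add_tsub_cancel_right]
    have : ∀ m, (1 + m) - 1 = m := fun m => by omega
    calc ∑ m ∈ Finset.range (i + 1 - 1), (g (1 + m - 1) - g (1 + m))
        = ∑ m ∈ Finset.range i, (g m - g (m + 1)) := by
          rw [Nat.add_sub_cancel]
          refine Finset.sum_congr rfl fun m _ => by rw [this, add_comm 1 m]
      _ = g 0 - g i := Finset.sum_range_sub' g i
  rw [tele]
  have hg0 : g 0 = 0 := by simp [hg]
  have hgi : g i = (1 : K[X]) ⊗ₜ[K] derivative ((X : K[X]) ^ i) := by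
    simp [hg, derivative_X_pow]
  rw [hg0, hgi]
  abel

/-- Let `𝔡 : k[z] → k[z] ⊗ k[z]` be the linear map defined by `𝔡(1) = 0` and
`𝔡(z^i) = Σ_{j=1}^{i} z^{i−j} ⊗ z^{j−1}` for `i ≥ 1`.  Then for every `φ ∈ k[z]`,
`((1 ⊗ d/dz) 𝔡(φ)) · (z ⊗ 1 − 1 ⊗ z) = 𝔡(φ) − 1 ⊗ φ'`. -/
theorem nc_derivative_identity (D : K[X] →ₗ[K] K[X] ⊗[K] K[X])
    (hD1 : D 1 = 0)
    (hD : ∀ i : ℕ, 1 ≤ i →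
      D (X ^ i) = ∑ j ∈ Finset.Icc 1 i, ((X : K[X]) ^ (i - j)) ⊗ₜ[K] ((X : K[X]) ^ (j - 1)))
    (φ : K[X]) :
    (TensorProduct.map LinearMap.id (Polynomial.derivative (R := K))) (D φ) *
        ((X : K[X]) ⊗ₜ[K] (1 : K[X]) - (1 : K[X]) ⊗ₜ[K] (X : K[X])) =
      D φ - (1 : K[X]) ⊗ₜ[K] derivative φ := by
  induction φ using Polynomial.induction_on' with
  | add p q hp hq =>
      rw [map_add, map_add, map_add, add_mul, hp, hq, TensorProduct.tmul_add]
      abel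
  | monomial n a =>
      have hmon : (monomial n a : K[X]) = a • X ^ n := by
        rw [smul_eq_C_mul, C_mul_X_pow_eq_monomial]
      have base : (TensorProduct.map LinearMap.id (Polynomial.derivative (R := K)))
            (D (X ^ n)) * ((X : K[X]) ⊗ₜ[K] (1 : K[X]) - (1 : K[X]) ⊗ₜ[K] (X : K[X])) =
          D (X ^ n) - (1 : K[X]) ⊗ₜ[K] derivative ((X : K[X]) ^ n) := by
        rcases Nat.eq_zero_or_pos n with h | h
        · subst h
          simp [hD1]
        · rw [hD n h, map_sum]
          simp only [TensorProduct.map_tmul, LinearMap.id_coe, id_eq]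
          exact nc_key K n h
      rw [hmon, map_smul, map_smul, smul_mul_assoc, base, map_smul,
        TensorProduct.tmul_smul, smul_sub]
end
end

section
/- In the periodic complex computing Hochschild cohomology of a quantum-type skew Calabi–Yau generalized Weyl algebra A with coefficients in A, a 2-cochain of the form U = (U₁, U₂, −kxz, kzy)ᵀ with U₁, U₂ ∈ k[z] and k ∈ k is a cocycle (d²(U) = 0) if and only if U₂ = σ(U₁) + k·σ(zp') , i.e., U₂(z) = U₁(qz) + k·qz·p'(qz). -/
open Polynomial

noncomputable section

variable (K : Type*) [Field K]

/-- The defining relations of the generalized Weyl algebra determined by an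
automorphism `σ` of `K[z]` and a polynomial `p`. -/
inductive GWARel (σ : K[X] ≃ₐ[K] K[X]) (p : K[X]) :
    FreeAlgebra K (Fin 3) → FreeAlgebra K (Fin 3) → Prop
  | xz : GWARel σ p (FreeAlgebra.ι K 0 * FreeAlgebra.ι K 2)
      (aeval (FreeAlgebra.ι K 2) (σ X) * FreeAlgebra.ι K 0)
  | yz : GWARel σ p (FreeAlgebra.ι K 1 * FreeAlgebra.ι K 2)
      (aeval (FreeAlgebra.ι K 2) (σ.symm X) * FreeAlgebra.ι K 1)
  | yx : GWARel σ p (FreeAlgebra.ι K 1 * FreeAlgebra.ι K 0)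
      (aeval (FreeAlgebra.ι K 2) p)
  | xy : GWARel σ p (FreeAlgebra.ι K 0 * FreeAlgebra.ι K 1)
      (aeval (FreeAlgebra.ι K 2) (σ p))

/-- The generalized Weyl algebra `K⟨x,y,z | xz = σ(z)x, yz = σ⁻¹(z)y, yx = p, xy = σ(p)⟩`. -/
abbrev GWA (σ : K[X] ≃ₐ[K] K[X]) (p : K[X]) := RingQuot (GWARel K σ p)

variable {K}

def GWA.x (σ : K[X] ≃ₐ[K] K[X]) (p : K[X]) : GWA K σ p :=
  RingQuot.mkAlgHom K _ (FreeAlgebra.ι K 0)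
def GWA.y (σ : K[X] ≃ₐ[K] K[X]) (p : K[X]) : GWA K σ p :=
  RingQuot.mkAlgHom K _ (FreeAlgebra.ι K 1)
def GWA.z (σ : K[X] ≃ₐ[K] K[X]) (p : K[X]) : GWA K σ p :=
  RingQuot.mkAlgHom K _ (FreeAlgebra.ι K 2)

/-- The action of a twisted tensor `φ₁ ⊗ φ₂` (with `𝔡(φ) = Σ φ₁ ⊗ φ₂`,
`𝔡(z^i) = Σ_{j=1}^{i} z^{i−j} ⊗ z^{j−1}`) on `A`, where `c a b` is a scalar twist of the
factor `z^a ⊗ z^b` (used for `σ(φ₁) ⊗ φ₂` and `φ₁ ⊗ σ(φ₂)` when `σ(z) = qz`). -/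
def ddAct (σ : K[X] ≃ₐ[K] K[X]) (p : K[X]) (c : ℕ → ℕ → K) (φ : K[X])
    (m : GWA K σ p) : GWA K σ p :=
  ∑ i ∈ Finset.range (φ.natDegree + 1), φ.coeff i •
    ∑ j ∈ Finset.range i, c (i - 1 - j) j • (GWA.z σ p ^ (i - 1 - j) * m * GWA.z σ p ^ j)

/-- The differential `d² : A⁴ → A⁴` of the periodic cochain complex, given by the matrix
with rows `[x⊗1, −1⊗x, −σ(p₁)⊗p₂, 0]`, `[−1⊗y, y⊗1, 0, −p₁⊗σ(p₂)]`,
`[z⊗1−1⊗z, 0, −y⊗1, −1⊗x]`, `[0, σ(z)⊗1−1⊗σ(z), −1⊗y, −x⊗1]`. -/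
def d2 (σ : K[X] ≃ₐ[K] K[X]) (p : K[X]) (q : K) (U : Fin 4 → GWA K σ p) :
    Fin 4 → GWA K σ p :=
  ![GWA.x σ p * U 0 - U 1 * GWA.x σ p - ddAct σ p (fun a _ => q ^ a) p (U 2),
    -(U 0 * GWA.y σ p) + GWA.y σ p * U 1 - ddAct σ p (fun _ b => q ^ b) p (U 3),
    GWA.z σ p * U 0 - U 0 * GWA.z σ p - GWA.y σ p * U 2 - U 3 * GWA.x σ p,
    q • (GWA.z σ p * U 1) - q • (U 1 * GWA.z σ p) - U 2 * GWA.y σ p - GWA.x σ p * U 3]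


namespace GWAaux

variable {σ : K[X] ≃ₐ[K] K[X]} {p : K[X]} {q : K}

lemma sigma_eq (hσ : σ X = C q * X) (f : K[X]) : σ f = aeval (C q * X) f := by
  rw [← hσ, aeval_algHom_apply σ X f, aeval_X_left_apply]

lemma sigma_symm_X (hq0 : q ≠ 0) (hσ : σ X = C q * X) : σ.symm X = C q⁻¹ * X := by
  apply σ.injective
  rw [AlgEquiv.apply_symm_apply, map_mul, hσ]
  have : σ (C q⁻¹) = C q⁻¹ := by
    simpa [Polynomial.algebraMap_eq] using AlgHomClass.commutes σ q⁻¹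
  rw [this, ← mul_assoc, ← C_mul, inv_mul_cancel₀ hq0, C_1, one_mul]

lemma sigma_symm_eq (hq0 : q ≠ 0) (hσ : σ X = C q * X) (f : K[X]) :
    σ.symm f = aeval (C q⁻¹ * X) f := by
  rw [← sigma_symm_X hq0 hσ, aeval_algHom_apply σ.symm X f, aeval_X_left_apply]

lemma xz_rel (hσ : σ X = C q * X) :
    GWA.x σ p * GWA.z σ p = q • (GWA.z σ p * GWA.x σ p) := by
  have h := RingQuot.mkAlgHom_rel K (GWARel.xz (σ := σ) (p := p))
  simp only [hσ, map_mul, aeval_C, aeval_X] at h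
  simpa [GWA.x, GWA.z, Algebra.smul_def, map_mul, mul_assoc] using h

lemma yz_rel (hq0 : q ≠ 0) (hσ : σ X = C q * X) :
    GWA.y σ p * GWA.z σ p = q⁻¹ • (GWA.z σ p * GWA.y σ p) := by
  have h := RingQuot.mkAlgHom_rel K (GWARel.yz (σ := σ) (p := p))
  simp only [sigma_symm_X hq0 hσ, map_mul, aeval_C, aeval_X] at h
  simpa [GWA.y, GWA.z, Algebra.smul_def, map_mul, mul_assoc] using h

lemma yx_rel : GWA.y σ p * GWA.x σ p = aeval (GWA.z σ p) p := by
  have h := RingQuot.mkAlgHom_rel K (GWARel.yx (σ := σ) (p := p))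
  simp only [map_mul] at h
  rw [GWA.y, GWA.x, GWA.z, h, ← aeval_algHom_apply]

lemma zx_rel (hq0 : q ≠ 0) (hσ : σ X = C q * X) :
    GWA.z σ p * GWA.x σ p = q⁻¹ • (GWA.x σ p * GWA.z σ p) := by
  rw [xz_rel hσ, smul_smul, inv_mul_cancel₀ hq0, one_smul]

lemma zy_rel (hq0 : q ≠ 0) (hσ : σ X = C q * X) :
    GWA.z σ p * GWA.y σ p = q • (GWA.y σ p * GWA.z σ p) := by
  rw [yz_rel hq0 hσ, smul_smul, mul_inv_cancel₀ hq0, one_smul]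

lemma x_zpow (hσ : σ X = C q * X) (i : ℕ) :
    GWA.x σ p * GWA.z σ p ^ i = q ^ i • (GWA.z σ p ^ i * GWA.x σ p) := by
  induction i with
  | zero => simp
  | succ n ih =>
    rw [pow_succ, ← mul_assoc, ih, smul_mul_assoc, mul_assoc, xz_rel hσ, pow_succ,
      mul_smul_comm, smul_smul, mul_assoc]

lemma zpow_x (hq0 : q ≠ 0) (hσ : σ X = C q * X) (i : ℕ) :
    GWA.z σ p ^ i * GWA.x σ p = (q⁻¹) ^ i • (GWA.x σ p * GWA.z σ p ^ i) := by
  rw [x_zpow hσ, smul_smul, ← mul_pow, inv_mul_cancel₀ hq0, one_pow, one_smul]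

lemma y_zpow (hq0 : q ≠ 0) (hσ : σ X = C q * X) (i : ℕ) :
    GWA.y σ p * GWA.z σ p ^ i = (q⁻¹) ^ i • (GWA.z σ p ^ i * GWA.y σ p) := by
  induction i with
  | zero => simp
  | succ n ih =>
    rw [pow_succ, ← mul_assoc, ih, smul_mul_assoc, mul_assoc, yz_rel hq0 hσ, pow_succ,
      mul_smul_comm, smul_smul, mul_assoc]

lemma zpow_y (hq0 : q ≠ 0) (hσ : σ X = C q * X) (i : ℕ) :
    GWA.z σ p ^ i * GWA.y σ p = q ^ i • (GWA.y σ p * GWA.z σ p ^ i) := by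
  rw [y_zpow hq0 hσ, smul_smul, ← mul_pow, mul_inv_cancel₀ hq0, one_pow, one_smul]

lemma aeval_sigma (hσ : σ X = C q * X) (f : K[X]) :
    aeval (GWA.z σ p) (σ f) = aeval (q • GWA.z σ p) f := by
  rw [sigma_eq hσ, ← aeval_algHom_apply (aeval (GWA.z σ p)) (C q * X) f,
    map_mul, aeval_C, aeval_X, Algebra.smul_def]

lemma aeval_sigma_symm (hq0 : q ≠ 0) (hσ : σ X = C q * X) (f : K[X]) :
    aeval (GWA.z σ p) (σ.symm f) = aeval (q⁻¹ • GWA.z σ p) f := by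
  rw [sigma_symm_eq hq0 hσ, ← aeval_algHom_apply (aeval (GWA.z σ p)) (C q⁻¹ * X) f,
    map_mul, aeval_C, aeval_X, Algebra.smul_def]

lemma x_aeval (hσ : σ X = C q * X) (f : K[X]) :
    GWA.x σ p * aeval (GWA.z σ p) f = aeval (GWA.z σ p) (σ f) * GWA.x σ p := by
  rw [aeval_sigma hσ, aeval_eq_sum_range (GWA.z σ p), aeval_eq_sum_range (q • GWA.z σ p),
    Finset.mul_sum, Finset.sum_mul]
  refine Finset.sum_congr rfl fun i _ => ?_
  rw [mul_smul_comm, x_zpow hσ, _root_.smul_pow, smul_mul_assoc, smul_mul_assoc]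

lemma y_aeval (hq0 : q ≠ 0) (hσ : σ X = C q * X) (f : K[X]) :
    GWA.y σ p * aeval (GWA.z σ p) f = aeval (GWA.z σ p) (σ.symm f) * GWA.y σ p := by
  rw [aeval_sigma_symm hq0 hσ, aeval_eq_sum_range (GWA.z σ p),
    aeval_eq_sum_range (q⁻¹ • GWA.z σ p), Finset.mul_sum, Finset.sum_mul]
  refine Finset.sum_congr rfl fun i _ => ?_
  rw [mul_smul_comm, y_zpow hq0 hσ, _root_.smul_pow, smul_mul_assoc, smul_mul_assoc]

lemma z_aeval (f : K[X]) :
    GWA.z σ p * aeval (GWA.z σ p) f = aeval (GWA.z σ p) f * GWA.z σ p := by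
  rw [aeval_eq_sum_range (GWA.z σ p), Finset.mul_sum, Finset.sum_mul]
  refine Finset.sum_congr rfl fun i _ => ?_
  rw [mul_smul_comm, smul_mul_assoc, ← pow_succ, ← pow_succ']


lemma gmul_neg (a b : GWA K σ p) : a * -b = -(a * b) := mul_neg a b
lemma gneg_mul (a b : GWA K σ p) : -a * b = -(a * b) := neg_mul a b
lemma gsmul_neg (a : K) (b : GWA K σ p) : a • -b = -(a • b) := smul_neg a b

lemma coeff_X_mul_derivative (f : K[X]) (i : ℕ) :
    (X * derivative f).coeff i = (i : K) * f.coeff i := by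
  cases i with
  | zero => simp [Polynomial.mul_coeff_zero]
  | succ n => rw [coeff_X_mul, coeff_derivative]; push_cast; ring

lemma natDegree_X_mul_derivative_lt (hp : 1 ≤ p.natDegree) :
    (X * derivative p).natDegree < p.natDegree + 1 := by
  rcases eq_or_ne (derivative p) 0 with h | h
  · simp [h]
  · rw [natDegree_X_mul h]
    have := Polynomial.natDegree_derivative_le p
    omega

lemma ddAct_x (hq0 : q ≠ 0) (hσ : σ X = C q * X) (hp : 1 ≤ p.natDegree) (c : K) :
    ddAct σ p (fun a _ => q ^ a) p (-(c • (GWA.x σ p * GWA.z σ p))) =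
      -(c • (GWA.x σ p * aeval (GWA.z σ p) (X * derivative p))) := by
  rw [ddAct, aeval_eq_sum_range' (natDegree_X_mul_derivative_lt hp), Finset.mul_sum,
    Finset.smul_sum, ← Finset.sum_neg_distrib]
  refine Finset.sum_congr rfl fun i _ => ?_
  have key : ∀ j ∈ Finset.range i, q ^ (i - 1 - j) •
      (GWA.z σ p ^ (i - 1 - j) * -(c • (GWA.x σ p * GWA.z σ p)) * GWA.z σ p ^ j) =
      -(c • (GWA.x σ p * GWA.z σ p ^ i)) := by
    intro j hj
    have hj' : j < i := Finset.mem_range.mp hj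
    rw [gmul_neg, gneg_mul, gsmul_neg, mul_smul_comm, smul_mul_assoc]
    have h1 : GWA.z σ p ^ (i - 1 - j) * (GWA.x σ p * GWA.z σ p) * GWA.z σ p ^ j =
        (q⁻¹) ^ (i - 1 - j) • (GWA.x σ p * GWA.z σ p ^ i) := by
      rw [mul_assoc, mul_assoc, ← pow_succ', ← mul_assoc, zpow_x hq0 hσ,
        smul_mul_assoc, mul_assoc, ← pow_add]
      congr 3
      omega
    rw [h1]
    have h2 : q ^ (i-1-j) • c • (q⁻¹) ^ (i-1-j) • (GWA.x σ p * GWA.z σ p ^ i)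
        = c • (GWA.x σ p * GWA.z σ p ^ i) := by
      rw [smul_smul, smul_smul]
      congr 1
      rw [mul_comm _ c, mul_assoc, ← mul_pow, mul_inv_cancel₀ hq0, one_pow, mul_one]
    rw [h2]
  rw [Finset.sum_congr rfl key, Finset.sum_const, Finset.card_range,
    coeff_X_mul_derivative, ← Nat.cast_smul_eq_nsmul K, mul_smul_comm]
  module

lemma ddAct_y (hq0 : q ≠ 0) (hσ : σ X = C q * X) (hp : 1 ≤ p.natDegree) (c : K) :
    ddAct σ p (fun _ b => q ^ b) p (c • (GWA.z σ p * GWA.y σ p)) =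
      c • (aeval (GWA.z σ p) (X * derivative p) * GWA.y σ p) := by
  rw [ddAct, aeval_eq_sum_range' (natDegree_X_mul_derivative_lt hp), Finset.sum_mul,
    Finset.smul_sum]
  refine Finset.sum_congr rfl fun i _ => ?_
  have key : ∀ j ∈ Finset.range i, q ^ j •
      (GWA.z σ p ^ (i - 1 - j) * (c • (GWA.z σ p * GWA.y σ p)) * GWA.z σ p ^ j) =
      c • q ^ i • (GWA.y σ p * GWA.z σ p ^ i) := by
    intro j hj
    have hj' : j < i := Finset.mem_range.mp hj
    rw [mul_smul_comm, smul_mul_assoc]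
    have h1 : GWA.z σ p ^ (i - 1 - j) * (GWA.z σ p * GWA.y σ p) * GWA.z σ p ^ j =
        q ^ (i - j) • (GWA.y σ p * GWA.z σ p ^ i) := by
      rw [← mul_assoc, ← pow_succ, show i - 1 - j + 1 = i - j from by omega,
        zpow_y hq0 hσ, smul_mul_assoc, mul_assoc, ← pow_add,
        show i - j + j = i from by omega]
    rw [h1, smul_smul, smul_smul, smul_smul]
    congr 1
    rw [show q ^ j * c * q ^ (i - j) = c * (q ^ j * q ^ (i - j)) from by ring,
      ← pow_add, show j + (i - j) = i from by omega]
  rw [Finset.sum_congr rfl key, Finset.sum_const, Finset.card_range,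
    coeff_X_mul_derivative, smul_mul_assoc, zpow_y hq0 hσ, ← Nat.cast_smul_eq_nsmul K]
  module


lemma aeval_z_mul_x_eq_zero (hq0 : q ≠ 0) (hq : ∀ n : ℕ, 0 < n → q ^ n ≠ 1)
    (hσ : σ X = C q * X) {f : K[X]}
    (h : aeval (GWA.z σ p) f * GWA.x σ p = 0) : f = 0 := by
  classical
  set V := (ℤ →₀ K) with hV
  set Xop : Module.End K V := Finsupp.lmapDomain K K (· + 1) with hXop
  set Yop : Module.End K V :=
    Finsupp.lsum K fun n => (Polynomial.eval (q ^ (1 - n)) p) • Finsupp.lsingle (n - 1) with hYop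
  set Zop : Module.End K V := Finsupp.lsum K fun n => (q ^ (-n)) • Finsupp.lsingle n with hZop
  have hX : ∀ (n : ℤ) (a : K), Xop (Finsupp.single n a) = Finsupp.single (n + 1) a := by
    intro n a
    rw [hXop]
    exact Finsupp.mapDomain_single
  have hY : ∀ (n : ℤ) (a : K), Yop (Finsupp.single n a) =
      Finsupp.single (n - 1) (Polynomial.eval (q ^ (1 - n)) p * a) := by
    intro n a
    rw [hYop, Finsupp.lsum_single, LinearMap.smul_apply, Finsupp.lsingle_apply,
      Finsupp.smul_single, smul_eq_mul]
  have hZ : ∀ (n : ℤ) (a : K), Zop (Finsupp.single n a) = Finsupp.single n (q ^ (-n) * a) := by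
    intro n a
    rw [hZop, Finsupp.lsum_single, LinearMap.smul_apply, Finsupp.lsingle_apply,
      Finsupp.smul_single, smul_eq_mul]
  have hZpow : ∀ (i : ℕ) (n : ℤ) (a : K), (Zop ^ i) (Finsupp.single n a) =
      Finsupp.single n ((q ^ (-n)) ^ i * a) := by
    intro i
    induction i with
    | zero => intro n a; simp only [pow_zero, Module.End.one_apply, one_mul]
    | succ m ih =>
      intro n a
      rw [pow_succ, Module.End.mul_apply, hZ, ih, pow_succ]
      congr 1
      ring
  have hZev : ∀ (g : K[X]) (n : ℤ) (a : K), (aeval Zop g) (Finsupp.single n a) =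
      Finsupp.single n (g.eval (q ^ (-n)) * a) := by
    intro g n a
    rw [aeval_eq_sum_range (R := K) Zop, LinearMap.sum_apply]
    simp only [LinearMap.smul_apply, hZpow, Finsupp.smul_single, smul_eq_mul]
    rw [eval_eq_sum_range, Finset.sum_mul, Finsupp.single_finset_sum]
    refine Finset.sum_congr rfl fun i _ => ?_
    rw [Finsupp.smul_single]
    congr 1
    rw [smul_eq_mul]
    ring
  have hσ' := sigma_symm_X (σ := σ) hq0 hσ
  set L : FreeAlgebra K (Fin 3) →ₐ[K] Module.End K V :=
    FreeAlgebra.lift K ![Xop, Yop, Zop] with hLdef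
  have hL0 : L (FreeAlgebra.ι K 0) = Xop := by rw [hLdef, FreeAlgebra.lift_ι_apply]; rfl
  have hL1 : L (FreeAlgebra.ι K 1) = Yop := by rw [hLdef, FreeAlgebra.lift_ι_apply]; rfl
  have hL2 : L (FreeAlgebra.ι K 2) = Zop := by rw [hLdef, FreeAlgebra.lift_ι_apply]; rfl
  have hrel : ∀ ⦃a b : FreeAlgebra K (Fin 3)⦄, GWARel K σ p a b → L a = L b := by
    intro a b hab
    cases hab with
    | xz =>
      rw [map_mul, map_mul, hL0, hL2, ← aeval_algHom_apply L (FreeAlgebra.ι K 2), hL2,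
        hσ, map_mul, aeval_C, aeval_X]
      refine Finsupp.lhom_ext fun n a => ?_
      rw [Module.End.mul_apply, Module.End.mul_apply, Module.End.mul_apply, hZ, hX, hX, hZ,
        Module.algebraMap_end_apply, Finsupp.smul_single, smul_eq_mul]
      congr 1
      rw [show (-n : ℤ) = 1 + -(n + 1) from by ring, zpow_add₀ hq0, zpow_one]
      ring
    | yz =>
      rw [map_mul, map_mul, hL1, hL2, ← aeval_algHom_apply L (FreeAlgebra.ι K 2), hL2,
        hσ', map_mul, aeval_C, aeval_X]
      refine Finsupp.lhom_ext fun n a => ?_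
      rw [Module.End.mul_apply, Module.End.mul_apply, Module.End.mul_apply, hZ, hY, hY, hZ,
        Module.algebraMap_end_apply, Finsupp.smul_single, smul_eq_mul]
      congr 1
      rw [show (-n : ℤ) = -1 + -(n - 1) from by ring, zpow_add₀ hq0, zpow_neg_one]
      ring
    | yx =>
      rw [map_mul, hL1, hL0, ← aeval_algHom_apply L (FreeAlgebra.ι K 2), hL2]
      refine Finsupp.lhom_ext fun n a => ?_
      rw [Module.End.mul_apply, hX, hY, hZev]
      have h1 : (n : ℤ) + 1 - 1 = n := by ring
      have h2 : (1 - (n + 1) : ℤ) = -n := by ring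
      rw [h1, h2]
    | xy =>
      rw [map_mul, hL0, hL1, ← aeval_algHom_apply L (FreeAlgebra.ι K 2), hL2]
      refine Finsupp.lhom_ext fun n a => ?_
      rw [Module.End.mul_apply, hY, hX, hZev]
      have h1 : (n : ℤ) - 1 + 1 = n := by ring
      rw [h1]
      congr 2
      rw [sigma_eq hσ, ← comp_eq_aeval, eval_comp, eval_mul, eval_C, eval_X,
        show (1 - n : ℤ) = 1 + -n from by ring, zpow_add₀ hq0, zpow_one]
  set ρ : GWA K σ p →ₐ[K] Module.End K V := RingQuot.liftAlgHom K ⟨L, hrel⟩ with hρdef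
  have hρz : ρ (GWA.z σ p) = Zop := by
    rw [GWA.z, hρdef, RingQuot.liftAlgHom_mkAlgHom_apply, hL2]
  have hρx : ρ (GWA.x σ p) = Xop := by
    rw [GWA.x, hρdef, RingQuot.liftAlgHom_mkAlgHom_apply, hL0]
  have hOp : aeval Zop f * Xop = 0 := by
    have h2 := congrArg ρ h
    rw [map_mul, map_zero, ← aeval_algHom_apply ρ (GWA.z σ p) f, hρz, hρx] at h2
    exact h2
  have hev : ∀ m : ℤ, f.eval (q ^ m) = 0 := by
    intro m
    have h3 := DFunLike.congr_fun hOp (Finsupp.single (-m - 1) (1 : K))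
    rw [Module.End.mul_apply, hX, show (-m - 1 + 1 : ℤ) = -m from by ring, hZev,
      LinearMap.zero_apply, Finsupp.single_eq_zero, mul_one, neg_neg] at h3
    exact h3
  have key : ∀ a b : ℕ, a < b → q ^ (a : ℤ) ≠ q ^ (b : ℤ) := by
    intro a b hab hEq
    rw [zpow_natCast, zpow_natCast] at hEq
    have h4 : q ^ a * q ^ (b - a) = q ^ a * 1 := by
      rw [← pow_add, show a + (b - a) = b from by omega, mul_one, ← hEq]
    exact hq (b - a) (by omega) (mul_left_cancel₀ (pow_ne_zero a hq0) h4)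
  have hinj : Function.Injective fun k : ℕ => q ^ (k : ℤ) := by
    intro a b hEq
    by_contra hne
    rcases Nat.lt_or_ge a b with h' | h'
    · exact key a b h' hEq
    · exact key b a (by omega) hEq.symm
  exact Polynomial.eq_zero_of_infinite_isRoot f
    (Set.infinite_of_injective_forall_mem (f := fun k : ℕ => q ^ (k : ℤ)) hinj
      fun k => hev (k : ℤ))



theorem gwa_two_cocycle_iff' (σ : K[X] ≃ₐ[K] K[X]) (p : K[X]) (q : K) (hq0 : q ≠ 0)
    (hq : ∀ n : ℕ, 0 < n → q ^ n ≠ 1) (hσ : σ X = C q * X)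
    (hp : 1 ≤ p.natDegree) (hsf : Squarefree p)
    (U₁ U₂ : K[X]) (c : K) :
    d2 σ p q
        ![aeval (GWA.z σ p) U₁, aeval (GWA.z σ p) U₂,
          -(c • (GWA.x σ p * GWA.z σ p)), c • (GWA.z σ p * GWA.y σ p)] = 0 ↔
      U₂ = σ U₁ + c • σ (X * derivative p) := by
  classical
  set F : K[X] := σ U₁ + c • σ (X * derivative p) - U₂ with hF
  have hFiff : F = 0 ↔ U₂ = σ U₁ + c • σ (X * derivative p) := by
    rw [hF, sub_eq_zero, eq_comm]
  have hsymm : σ.symm F = U₁ + c • (X * derivative p) - σ.symm U₂ := by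
    rw [hF, map_sub, map_add, map_smul, AlgEquiv.symm_apply_apply, AlgEquiv.symm_apply_apply]
  have hrow : d2 σ p q ![aeval (GWA.z σ p) U₁, aeval (GWA.z σ p) U₂,
      -(c • (GWA.x σ p * GWA.z σ p)), c • (GWA.z σ p * GWA.y σ p)] =
      ![aeval (GWA.z σ p) F * GWA.x σ p,
        aeval (GWA.z σ p) (-(σ.symm F)) * GWA.y σ p, 0, 0] := by
    funext i
    fin_cases i
    · -- row 0
      show GWA.x σ p * aeval (GWA.z σ p) U₁ - aeval (GWA.z σ p) U₂ * GWA.x σ p -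
        ddAct σ p (fun a _ => q ^ a) p (-(c • (GWA.x σ p * GWA.z σ p))) =
        aeval (GWA.z σ p) F * GWA.x σ p
      rw [ddAct_x hq0 hσ hp c, x_aeval hσ U₁, x_aeval hσ (X * derivative p),
        hF, map_sub, map_add, map_smul, sub_mul, add_mul, smul_mul_assoc]
      module
    · -- row 1
      show -(aeval (GWA.z σ p) U₁ * GWA.y σ p) + GWA.y σ p * aeval (GWA.z σ p) U₂ -
        ddAct σ p (fun _ b => q ^ b) p (c • (GWA.z σ p * GWA.y σ p)) =
        aeval (GWA.z σ p) (-(σ.symm F)) * GWA.y σ p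
      rw [ddAct_y hq0 hσ hp c, y_aeval hq0 hσ U₂, map_neg, hsymm, gneg_mul,
        map_sub, map_add, map_smul, sub_mul, add_mul, smul_mul_assoc]
      module
    · -- row 2
      show GWA.z σ p * aeval (GWA.z σ p) U₁ - aeval (GWA.z σ p) U₁ * GWA.z σ p -
        GWA.y σ p * -(c • (GWA.x σ p * GWA.z σ p)) -
        c • (GWA.z σ p * GWA.y σ p) * GWA.x σ p = _
      rw [z_aeval U₁, gmul_neg, mul_smul_comm, ← mul_assoc, yx_rel,
        smul_mul_assoc, mul_assoc, yx_rel, z_aeval p]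
      show _ = (0 : GWA K σ p)
      abel
    · -- row 3
      show q • (GWA.z σ p * aeval (GWA.z σ p) U₂) - q • (aeval (GWA.z σ p) U₂ * GWA.z σ p) -
        -(c • (GWA.x σ p * GWA.z σ p)) * GWA.y σ p -
        GWA.x σ p * (c • (GWA.z σ p * GWA.y σ p)) = _
      rw [z_aeval U₂, gneg_mul, smul_mul_assoc, mul_smul_comm, mul_assoc]
      show _ = (0 : GWA K σ p)
      abel
  constructor
  · intro h
    rw [hrow] at h
    have h0 := congrFun h 0
    simp only [Matrix.cons_val_zero, Pi.zero_apply] at h0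
    exact hFiff.mp (aeval_z_mul_x_eq_zero hq0 hq hσ h0)
  · intro h
    rw [hrow, hFiff.mpr h]
    funext i
    fin_cases i <;> simp

end GWAaux

/-- In the periodic complex computing the Hochschild cohomology of a
quantum-type skew Calabi–Yau generalized Weyl algebra, a 2-cochain of the form
`U = (U₁, U₂, −kxz, kzy)ᵀ` with `U₁, U₂ ∈ k[z]` is a cocycle iff
`U₂ = σ(U₁) + k·σ(zp')`. -/
theorem gwa_two_cocycle_iff (σ : K[X] ≃ₐ[K] K[X]) (p : K[X]) (q : K) (hq0 : q ≠ 0)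
    (hq : ∀ n : ℕ, 0 < n → q ^ n ≠ 1) (hσ : σ X = C q * X)
    (hp : 1 ≤ p.natDegree) (hsf : Squarefree p)
    (U₁ U₂ : K[X]) (c : K) :
    d2 σ p q
        ![aeval (GWA.z σ p) U₁, aeval (GWA.z σ p) U₂,
          -(c • (GWA.x σ p * GWA.z σ p)), c • (GWA.z σ p * GWA.y σ p)] = 0 ↔
      U₂ = σ U₁ + c • σ (X * derivative p) := by
  exact GWAaux.gwa_two_cocycle_iff' σ p q hq0 hq hσ hp hsf U₁ U₂ c
end
end

section
/- Let q be generic and A the quantum-type skew Calabi–Yau GWA with p = Σ_{i=0}^{n} a_i z^{n−i}, a₀ ≠ 0, and let u^i denote the cohomology class of (z^i, σ(z^i), 0, 0)ᵀ in H²(S) of the periodic cochain complex. Then the classes satisfy the two linear relations Σ_{i=0}^{n} a_i u^{n−i} = 0 and Σ_{i=0}^{n−1} (n−i) a_i u^{n−i} = 0. -/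
open Polynomial

noncomputable section

variable (K : Type*) [Field K]

variable {K}

/-- The differential `d¹ : A³ → A⁴` of the periodic cochain complex `S`, given by the
matrix with rows `[y⊗1, 1⊗x, −p₁⊗p₂]`, `[1⊗y, x⊗1, −qσ(p₁)⊗σ(p₂)]`,
`[σ(z)⊗1−1⊗z, 0, q⊗x−x⊗1]`, `[0, z⊗1−1⊗σ(z), 1⊗y−y⊗q]`. -/
def d1 (σ : K[X] ≃ₐ[K] K[X]) (p : K[X]) (q : K) (V : Fin 3 → GWA K σ p) :
    Fin 4 → GWA K σ p :=
  ![GWA.y σ p * V 0 + V 1 * GWA.x σ p - ddAct σ p (fun _ _ => 1) p (V 2),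
    V 0 * GWA.y σ p + GWA.x σ p * V 1 - q • ddAct σ p (fun a b => q ^ a * q ^ b) p (V 2),
    q • (GWA.z σ p * V 0) - V 0 * GWA.z σ p + q • (V 2 * GWA.x σ p) - GWA.x σ p * V 2,
    GWA.z σ p * V 1 - q • (V 1 * GWA.z σ p) + V 2 * GWA.y σ p - q • (GWA.y σ p * V 2)]

section Aux
variable {K : Type*} [Field K] (σ : Polynomial K ≃ₐ[K] Polynomial K) (p : Polynomial K)

lemma gwa_xz (q : K) (hσ : σ X = C q * X) :
    GWA.x σ p * GWA.z σ p = q • (GWA.z σ p * GWA.x σ p) := by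
  have h : GWA.x σ p * GWA.z σ p
      = aeval (GWA.z σ p) (σ X) * GWA.x σ p := by
    calc GWA.x σ p * GWA.z σ p
        = RingQuot.mkAlgHom K (GWARel K σ p) (FreeAlgebra.ι K 0 * FreeAlgebra.ι K 2) :=
          (map_mul _ _ _).symm
      _ = RingQuot.mkAlgHom K (GWARel K σ p)
            (aeval (FreeAlgebra.ι K 2) (σ X) * FreeAlgebra.ι K 0) :=
          RingQuot.mkAlgHom_rel K GWARel.xz
      _ = aeval (GWA.z σ p) (σ X) * GWA.x σ p := by
          rw [map_mul]; congr 1; exact (aeval_algHom_apply _ _ _).symm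
  rw [hσ, map_mul, aeval_C, aeval_X] at h
  rw [h, Algebra.smul_def, mul_assoc]

lemma gwa_yx : GWA.y σ p * GWA.x σ p = aeval (GWA.z σ p) p := by
  calc GWA.y σ p * GWA.x σ p
      = RingQuot.mkAlgHom K (GWARel K σ p) (FreeAlgebra.ι K 1 * FreeAlgebra.ι K 0) :=
        (map_mul _ _ _).symm
    _ = RingQuot.mkAlgHom K (GWARel K σ p) (aeval (FreeAlgebra.ι K 2) p) :=
        RingQuot.mkAlgHom_rel K GWARel.yx
    _ = aeval (GWA.z σ p) p := (aeval_algHom_apply _ _ _).symm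

lemma gwa_xy : GWA.x σ p * GWA.y σ p = aeval (GWA.z σ p) (σ p) := by
  calc GWA.x σ p * GWA.y σ p
      = RingQuot.mkAlgHom K (GWARel K σ p) (FreeAlgebra.ι K 0 * FreeAlgebra.ι K 1) :=
        (map_mul _ _ _).symm
    _ = RingQuot.mkAlgHom K (GWARel K σ p) (aeval (FreeAlgebra.ι K 2) (σ p)) :=
        RingQuot.mkAlgHom_rel K GWARel.xy
    _ = aeval (GWA.z σ p) (σ p) := (aeval_algHom_apply _ _ _).symm

lemma gwa_zy (q : K) (hq0 : q ≠ 0) (hσ : σ X = C q * X) :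
    GWA.z σ p * GWA.y σ p = q • (GWA.y σ p * GWA.z σ p) := by
  have hsymm : σ.symm X = C q⁻¹ * X := by
    have h1 : C q * σ.symm X = X := by
      conv_rhs => rw [← σ.symm_apply_apply X, hσ, map_mul]
      congr 1
      exact (σ.symm.commutes q).symm
    rw [show σ.symm X = C q⁻¹ * (C q * σ.symm X) by
      rw [← mul_assoc, ← C_mul, inv_mul_cancel₀ hq0, C_1, one_mul], h1]
  have h : GWA.y σ p * GWA.z σ p = q⁻¹ • (GWA.z σ p * GWA.y σ p) := by
    have h2 : GWA.y σ p * GWA.z σ p = aeval (GWA.z σ p) (σ.symm X) * GWA.y σ p := by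
      calc GWA.y σ p * GWA.z σ p
          = RingQuot.mkAlgHom K (GWARel K σ p) (FreeAlgebra.ι K 1 * FreeAlgebra.ι K 2) :=
            (map_mul _ _ _).symm
        _ = RingQuot.mkAlgHom K (GWARel K σ p)
              (aeval (FreeAlgebra.ι K 2) (σ.symm X) * FreeAlgebra.ι K 1) :=
            RingQuot.mkAlgHom_rel K GWARel.yz
        _ = aeval (GWA.z σ p) (σ.symm X) * GWA.y σ p := by
            rw [map_mul]; congr 1; exact (aeval_algHom_apply _ _ _).symm
    rw [hsymm, map_mul, aeval_C, aeval_X] at h2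
    rw [h2, Algebra.smul_def, mul_assoc]
  rw [h, smul_smul, mul_inv_cancel₀ hq0, one_smul]

end Aux

section Aux2
variable {K : Type*} [Field K] (σ : Polynomial K ≃ₐ[K] Polynomial K) (p : Polynomial K)

lemma ddAct_zero (c : ℕ → ℕ → K) (φ : Polynomial K) : ddAct σ p c φ 0 = 0 := by
  simp [ddAct]

lemma ddAct_neg (c : ℕ → ℕ → K) (φ : Polynomial K) (m : GWA K σ p) :
    ddAct σ p c φ (-m) = - ddAct σ p c φ m := by
  unfold ddAct
  rw [← Finset.sum_neg_distrib]
  refine Finset.sum_congr rfl fun i _ => ?_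
  rw [show (∑ j ∈ Finset.range i,
        c (i - 1 - j) j • (GWA.z σ p ^ (i - 1 - j) * -m * GWA.z σ p ^ j))
      = -(∑ j ∈ Finset.range i,
        c (i - 1 - j) j • (GWA.z σ p ^ (i - 1 - j) * m * GWA.z σ p ^ j)) by
    rw [← Finset.sum_neg_distrib]
    refine Finset.sum_congr rfl fun j _ => ?_
    rw [mul_neg (GWA.z σ p ^ (i - 1 - j)) m,
      neg_mul (GWA.z σ p ^ (i - 1 - j) * m) (GWA.z σ p ^ j), smul_neg]]
  rw [smul_neg]

lemma ddAct_z_one (φ : Polynomial K) :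
    ddAct σ p (fun _ _ => (1:K)) φ (GWA.z σ p) =
      ∑ i ∈ Finset.range (φ.natDegree + 1), φ.coeff i • (i • GWA.z σ p ^ i) := by
  unfold ddAct
  refine Finset.sum_congr rfl fun i _ => ?_
  congr 1
  calc (∑ j ∈ Finset.range i,
        (1:K) • (GWA.z σ p ^ (i - 1 - j) * GWA.z σ p * GWA.z σ p ^ j))
      = ∑ _j ∈ Finset.range i, GWA.z σ p ^ i := by
        refine Finset.sum_congr rfl fun j hj => ?_
        have hj' := Finset.mem_range.mp hj
        rw [one_smul, ← pow_succ, ← pow_add]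
        congr 1
        omega
    _ = i • GWA.z σ p ^ i := by rw [Finset.sum_const, Finset.card_range]

lemma ddAct_z_q (q : K) (φ : Polynomial K) :
    q • ddAct σ p (fun a b => q ^ a * q ^ b) φ (GWA.z σ p) =
      ∑ i ∈ Finset.range (φ.natDegree + 1),
        φ.coeff i • (i • (q ^ i • GWA.z σ p ^ i)) := by
  unfold ddAct
  rw [Finset.smul_sum]
  refine Finset.sum_congr rfl fun i _ => ?_
  rw [smul_comm]
  congr 1
  rw [Finset.smul_sum]
  calc (∑ j ∈ Finset.range i, q • ((q ^ (i - 1 - j) * q ^ j) •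
        (GWA.z σ p ^ (i - 1 - j) * GWA.z σ p * GWA.z σ p ^ j)))
      = ∑ _j ∈ Finset.range i, q ^ i • GWA.z σ p ^ i := by
        refine Finset.sum_congr rfl fun j hj => ?_
        have hj' := Finset.mem_range.mp hj
        rw [smul_smul,
          show q * (q ^ (i - 1 - j) * q ^ j) = q ^ i by
            rw [← pow_add, ← pow_succ']; congr 1; omega,
          show GWA.z σ p ^ (i - 1 - j) * GWA.z σ p * GWA.z σ p ^ j = GWA.z σ p ^ i by
            rw [← pow_succ, ← pow_add]; congr 1; omega]
    _ = i • (q ^ i • GWA.z σ p ^ i) := by rw [Finset.sum_const, Finset.card_range]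

end Aux2

private lemma vec4_ext {α : Type*} {a0 a1 a2 a3 b0 b1 b2 b3 : α}
    (h0 : a0 = b0) (h1 : a1 = b1) (h2 : a2 = b2) (h3 : a3 = b3) :
    ![a0, a1, a2, a3] = ![b0, b1, b2, b3] := by
  subst h0 h1 h2 h3; rfl

/-- For `p = Σ_{i=0}^{n} a_i z^{n−i}` with `a₀ ≠ 0` and `u^i` the class of
`(z^i, σ(z^i), 0, 0)ᵀ` in `H²(S)`, the classes satisfy `Σ_{i=0}^{n} a_i u^{n−i} = 0` and
`Σ_{i=0}^{n−1} (n−i) a_i u^{n−i} = 0`; i.e. the corresponding combinations of cocycles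
are coboundaries (images under `d¹`). -/
theorem gwa_H2_relations (σ : K[X] ≃ₐ[K] K[X]) (p : K[X]) (q : K) (hq0 : q ≠ 0)
    (hq : ∀ n : ℕ, 0 < n → q ^ n ≠ 1) (hσ : σ X = C q * X)
    (hsf : Squarefree p)
    (n : ℕ) (hn : 1 ≤ n) (a : ℕ → K) (ha0 : a 0 ≠ 0)
    (hpa : p = ∑ i ∈ Finset.range (n + 1), C (a i) * X ^ (n - i)) :
    (∃ V : Fin 3 → GWA K σ p,
      d1 σ p q V =
        ![∑ i ∈ Finset.range (n + 1), a i • GWA.z σ p ^ (n - i),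
          ∑ i ∈ Finset.range (n + 1), a i • aeval (GWA.z σ p) (σ (X ^ (n - i))),
          0, 0]) ∧
    (∃ V : Fin 3 → GWA K σ p,
      d1 σ p q V =
        ![∑ i ∈ Finset.range (n + 1), ((n - i : ℕ) : K) • a i • GWA.z σ p ^ (n - i),
          ∑ i ∈ Finset.range (n + 1),
            ((n - i : ℕ) : K) • a i • aeval (GWA.z σ p) (σ (X ^ (n - i))),
          0, 0]) := by
  have pcoeff : ∀ k ∈ Finset.range (n + 1), p.coeff k = a (n - k) := by
    intro k hk
    have hk' : k ≤ n := Nat.lt_succ_iff.mp (Finset.mem_range.mp hk)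
    rw [hpa, finset_sum_coeff]
    rw [Finset.sum_eq_single (n - k)]
    · rw [coeff_C_mul, coeff_X_pow, if_pos (by omega), mul_one]
    · intro i hi hne
      have hi' := Finset.mem_range.mp hi
      rw [coeff_C_mul, coeff_X_pow, if_neg (by omega), mul_zero]
    · intro h
      exact absurd (Finset.mem_range.mpr (by omega)) h
  have pdeg : p.natDegree = n := by
    refine le_antisymm ?_ ?_
    · rw [hpa]
      refine Polynomial.natDegree_sum_le_of_forall_le _ _ fun i _ => ?_
      exact (Polynomial.natDegree_C_mul_le _ _).trans
        (by rw [Polynomial.natDegree_X_pow]; omega)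
    · refine Polynomial.le_natDegree_of_ne_zero ?_
      rw [pcoeff n (Finset.mem_range.mpr (by omega)), Nat.sub_self]
      exact ha0
  have hXk : ∀ k : ℕ, aeval (GWA.z σ p) (σ (X ^ k)) = q ^ k • GWA.z σ p ^ k := by
    intro k
    rw [map_pow, hσ, mul_pow, ← C_pow, map_mul, aeval_C, aeval_X_pow,
      ← Algebra.smul_def]
  have hσC : ∀ c : K, σ (C c) = C c := fun c => by
    simpa [Polynomial.algebraMap_eq] using σ.commutes c
  constructor
  · refine ⟨![0, GWA.y σ p, 0], vec4_ext ?_ ?_ ?_ ?_⟩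
    · simp only [Matrix.cons_val_zero, Matrix.cons_val_one, Matrix.cons_val_two,
        Matrix.head_cons, Matrix.tail_cons]
      rw [mul_zero (GWA.y σ p), ddAct_zero, sub_zero, zero_add, gwa_yx,
        show aeval (GWA.z σ p) p
            = aeval (GWA.z σ p) (∑ i ∈ Finset.range (n + 1), C (a i) * X ^ (n - i))
          from congrArg _ hpa, map_sum]
      refine Finset.sum_congr rfl fun i _ => ?_
      rw [map_mul, aeval_C, aeval_X_pow, ← Algebra.smul_def]
    · simp only [Matrix.cons_val_zero, Matrix.cons_val_one, Matrix.cons_val_two,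
        Matrix.head_cons, Matrix.tail_cons]
      rw [zero_mul (GWA.y σ p), ddAct_zero, smul_zero, sub_zero, zero_add, gwa_xy,
        show aeval (GWA.z σ p) (σ p)
            = aeval (GWA.z σ p)
                (σ (∑ i ∈ Finset.range (n + 1), C (a i) * X ^ (n - i)))
          from congrArg _ (congrArg _ hpa), map_sum, map_sum]
      refine Finset.sum_congr rfl fun i _ => ?_
      rw [map_mul, hσC, map_mul, aeval_C, ← Algebra.smul_def]
    · simp only [Matrix.cons_val_zero, Matrix.cons_val_one, Matrix.cons_val_two,
        Matrix.head_cons, Matrix.tail_cons]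
      rw [mul_zero (GWA.z σ p), zero_mul (GWA.z σ p), zero_mul (GWA.x σ p),
        mul_zero (GWA.x σ p), smul_zero]
      abel
    · simp only [Matrix.cons_val_zero, Matrix.cons_val_one, Matrix.cons_val_two,
        Matrix.head_cons, Matrix.tail_cons]
      rw [zero_mul (GWA.y σ p), mul_zero (GWA.y σ p), smul_zero,
        gwa_zy σ p q hq0 hσ]
      abel
  · refine ⟨![0, 0, -GWA.z σ p], vec4_ext ?_ ?_ ?_ ?_⟩
    · simp only [Matrix.cons_val_zero, Matrix.cons_val_one, Matrix.cons_val_two,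
        Matrix.head_cons, Matrix.tail_cons]
      rw [mul_zero (GWA.y σ p), zero_mul (GWA.x σ p), zero_add, ddAct_neg,
        sub_neg_eq_add, zero_add, ddAct_z_one, pdeg,
        ← Finset.sum_range_reflect
          (fun i => ((n - i : ℕ) : K) • a i • GWA.z σ p ^ (n - i)) (n + 1)]
      refine Finset.sum_congr rfl fun j hj => ?_
      have hj' : j ≤ n := Nat.lt_succ_iff.mp (Finset.mem_range.mp hj)
      rw [Nat.add_sub_cancel, Nat.sub_sub_self hj', pcoeff j hj,
        ← Nat.cast_smul_eq_nsmul K j (GWA.z σ p ^ j),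
        smul_comm (a (n - j)) ((j : ℕ) : K) (GWA.z σ p ^ j)]
    · simp only [Matrix.cons_val_zero, Matrix.cons_val_one, Matrix.cons_val_two,
        Matrix.head_cons, Matrix.tail_cons]
      rw [zero_mul (GWA.y σ p), mul_zero (GWA.x σ p), zero_add, ddAct_neg,
        smul_neg, sub_neg_eq_add, zero_add, ddAct_z_q, pdeg,
        ← Finset.sum_range_reflect
          (fun i => ((n - i : ℕ) : K) • a i • aeval (GWA.z σ p) (σ (X ^ (n - i))))
          (n + 1)]
      refine Finset.sum_congr rfl fun j hj => ?_
      have hj' : j ≤ n := Nat.lt_succ_iff.mp (Finset.mem_range.mp hj)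
      rw [Nat.add_sub_cancel, Nat.sub_sub_self hj', pcoeff j hj, hXk j,
        ← Nat.cast_smul_eq_nsmul K j (q ^ j • GWA.z σ p ^ j),
        smul_comm (a (n - j)) ((j : ℕ) : K) (q ^ j • GWA.z σ p ^ j)]
    · simp only [Matrix.cons_val_zero, Matrix.cons_val_one, Matrix.cons_val_two,
        Matrix.head_cons, Matrix.tail_cons]
      rw [mul_zero (GWA.z σ p), smul_zero, zero_mul (GWA.z σ p),
        neg_mul (GWA.z σ p) (GWA.x σ p), smul_neg,
        mul_neg (GWA.x σ p) (GWA.z σ p), sub_neg_eq_add, gwa_xz σ p q hσ]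
      abel
    · simp only [Matrix.cons_val_zero, Matrix.cons_val_one, Matrix.cons_val_two,
        Matrix.head_cons, Matrix.tail_cons]
      rw [mul_zero (GWA.z σ p), zero_mul (GWA.z σ p), smul_zero,
        neg_mul (GWA.z σ p) (GWA.y σ p), mul_neg (GWA.y σ p) (GWA.z σ p),
        smul_neg, gwa_zy σ p q hq0 hσ]
      abel
end
end

section
/- The quantum weighted projective line WL_q(1, l) is the generalized Weyl algebra on generators x, y, z with relations xz = q^{2l}zx, yz = q^{−2l}zy, yx = z·∏_{i=1}^{l}(1 − q^{−2i}z), xy = q^{2l}·z·∏_{i=0}^{l−1}(1 − q^{2i}z), and the defining polynomial p(z) = z·∏_{i=1}^{l}(1 − q^{−2i}z) has no multiple roots when q is transcendental over ℚ; moreover the fourth relation equals σ(p) where σ(z) = q^{2l}z. -/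
open Polynomial

noncomputable section

lemma transcendental_ne_zero {q : ℂ} (hq : Transcendental ℚ q) : q ≠ 0 := by
  rintro rfl
  exact hq isAlgebraic_zero

lemma transcendental_pow_ne_one {q : ℂ} (hq : Transcendental ℚ q) {n : ℕ} (hn : n ≠ 0) :
    q ^ n ≠ 1 := by
  intro h
  apply hq
  refine ⟨X ^ n - 1, ?_, by simp [h]⟩
  intro h0
  have := congrArg (Polynomial.coeff · n) h0
  simp [Polynomial.coeff_X_pow, Polynomial.coeff_one, hn] at this

/-- The quantum weighted projective line `WL_q(1, l)` is the generalized
Weyl algebra with defining polynomial `p(z) = z·∏_{i=1}^{l}(1 − q^{−2i}z)`: the fourth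
relation `xy = q^{2l}·z·∏_{i=0}^{l−1}(1 − q^{2i}z)` equals `σ(p)` for `σ(z) = q^{2l}z`,
and `p` has no multiple roots when `q` is transcendental over `ℚ`. -/
theorem quantum_weighted_projective_line (q : ℂ) (hq : Transcendental ℚ q) (l : ℕ)
    (hl : 1 ≤ l) :
    (X * ∏ i ∈ Finset.Icc 1 l, (1 - C ((q ^ (2 * i))⁻¹) * X)).comp
        (C (q ^ (2 * l)) * X) =
      C (q ^ (2 * l)) * X * ∏ i ∈ Finset.range l, (1 - C (q ^ (2 * i)) * X) ∧
    Squarefree (X * ∏ i ∈ Finset.Icc 1 l, (1 - C ((q ^ (2 * i))⁻¹) * X)) := by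
  have hq0 : q ≠ 0 := transcendental_ne_zero hq
  constructor
  · rw [mul_comp, X_comp, prod_comp]
    congr 1
    have hcomp : ∀ i ∈ Finset.Icc 1 l, (1 - C ((q ^ (2 * i))⁻¹) * X).comp (C (q ^ (2 * l)) * X)
        = 1 - C (q ^ (2 * (l - i))) * X := by
      intro i hi
      rw [Finset.mem_Icc] at hi
      rw [sub_comp, one_comp, mul_comp, C_comp, X_comp, ← mul_assoc, ← C_mul]
      congr 3
      rw [inv_mul_eq_div, div_eq_iff (pow_ne_zero _ hq0), ← pow_add]
      congr 1
      omega
    rw [Finset.prod_congr rfl hcomp]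
    refine Finset.prod_nbij' (fun i => l - i) (fun j => l - j) ?_ ?_ ?_ ?_ ?_ <;>
      intro a ha <;> simp only [Finset.mem_Icc, Finset.mem_range] at * <;>
      omega
  · -- squarefree
    set p : ℂ[X] := X * ∏ i ∈ Finset.Icc 1 l, (1 - C ((q ^ (2 * i))⁻¹) * X) with hp
    have key : ∀ i ∈ Finset.Icc 1 l,
        (1 - C ((q ^ (2 * i))⁻¹) * X) = C (-(q ^ (2 * i))⁻¹) * (X - C (q ^ (2 * i))) := by
      intro i _
      rw [map_neg, neg_mul, mul_sub, ← C_mul, inv_mul_cancel₀ (pow_ne_zero _ hq0), map_one]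
      ring
    have hbig : Squarefree (∏ i ∈ Finset.Icc 0 l,
        (X - C (if i = 0 then (0 : ℂ) else q ^ (2 * i)))) := by
      apply Polynomial.Separable.squarefree
      rw [Polynomial.separable_prod_X_sub_C_iff']
      intro x hx y hy hxy
      by_contra hne
      have hpow : ∀ {a b : ℕ}, a < b → q ^ (2 * a) ≠ q ^ (2 * b) := by
        intro a b hab h
        have h1 : q ^ (2 * b - 2 * a) = 1 := by
          refine mul_left_cancel₀ (pow_ne_zero (2 * a) hq0) ?_
          rw [← pow_add, mul_one, show 2 * a + (2 * b - 2 * a) = 2 * b by omega]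
          exact h.symm
        exact transcendental_pow_ne_one hq (by omega) h1
      rcases eq_or_ne x 0 with rfl | hx0
      · rw [if_pos rfl, if_neg (fun h => hne h.symm)] at hxy
        exact pow_ne_zero _ hq0 hxy.symm
      rcases eq_or_ne y 0 with rfl | hy0
      · rw [if_pos rfl, if_neg hx0] at hxy
        exact pow_ne_zero _ hq0 hxy
      rw [if_neg hx0, if_neg hy0] at hxy
      rcases lt_or_gt_of_ne hne with h | h
      · exact hpow h hxy
      · exact hpow h hxy.symm
    have hk0 : (∏ i ∈ Finset.Icc 1 l, (-(q ^ (2 * i))⁻¹)) ≠ 0 := by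
      apply Finset.prod_ne_zero_iff.mpr
      intro i _
      simp [hq0]
    have hpeq : p = C (∏ i ∈ Finset.Icc 1 l, (-(q ^ (2 * i))⁻¹)) *
        ∏ i ∈ Finset.Icc 0 l, (X - C (if i = 0 then (0 : ℂ) else q ^ (2 * i))) := by
      have h0l : Finset.Icc 0 l = insert 0 (Finset.Icc 1 l) := by
        ext i; simp; omega
      rw [h0l, Finset.prod_insert (by simp)]
      rw [if_pos rfl, map_zero, sub_zero]
      rw [hp, Finset.prod_congr rfl key, Finset.prod_mul_distrib, ← map_prod]
      have heq2 : ∀ i ∈ Finset.Icc 1 l,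
          (X - C (if i = 0 then (0:ℂ) else q ^ (2 * i))) = X - C (q ^ (2 * i)) := by
        intro i hi
        rw [Finset.mem_Icc] at hi
        rw [if_neg (by omega)]
      rw [Finset.prod_congr rfl heq2]
      ring
    have hdvd : p ∣ ∏ i ∈ Finset.Icc 0 l,
        (X - C (if i = 0 then (0 : ℂ) else q ^ (2 * i))) := by
      refine ⟨C (∏ i ∈ Finset.Icc 1 l, (-(q ^ (2 * i))⁻¹))⁻¹, ?_⟩
      rw [hpeq, mul_comm, ← mul_assoc, ← C_mul, inv_mul_cancel₀ hk0, map_one, one_mul]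
    exact hbig.squarefree_of_dvd hdvd
end
end
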